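/- If a > 1 and β > 1, then P_{a,β}(z) = a·z^{β+1} − z^β + (1+a)·z − 2a is strictly increasing on (0,∞), and hence z = 1 is its unique root in (0,∞). -/

import Mathlib

/-! By weighted AM–GM, `β z^(β-1) ≤ (β-1) z^β + 1`, so the derivative
`a(β+1) z^β - β z^(β-1) + (1+a)` is at least `(a(β+1) - (β-1)) z^β + a > 0`;
injectivity then leaves `z = 1` as the only root. -/

noncomputable def P (a β z : ℝ) : ℝ := a * z ^ (β + 1) - z ^ β + (1 + a) * z - 2 * a

open Set

lemma mul_rpow_sub_one_le {p z : ℝ} (hp : 1 ≤ p) (hz : 0 ≤ z) :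
    p * z ^ (p - 1) ≤ (p - 1) * z ^ p + 1 := by
  have hp0 : 0 < p := by linarith
  have amgm : (z ^ p) ^ ((p - 1) / p) * 1 ^ (1 / p) ≤ (p - 1) / p * z ^ p + 1 / p * 1 :=
    Real.geom_mean_le_arith_mean2_weighted (div_nonneg (by linarith) hp0.le)
      (by positivity) (by positivity) zero_le_one (by field_simp; ring)
  rw [← Real.rpow_mul hz, mul_div_cancel₀ _ hp0.ne', Real.one_rpow, mul_one, mul_one] at amgm
  calc p * z ^ (p - 1) ≤ p * ((p - 1) / p * z ^ p + 1 / p) := by gcongr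
    _ = (p - 1) * z ^ p + 1 := by field_simp

lemma hasDerivAt_P (a β : ℝ) {z : ℝ} (hz : 0 < z) :
    HasDerivAt (P a β) (a * ((β + 1) * z ^ β) - β * z ^ (β - 1) + (1 + a)) z := by
  have h₁ := (Real.hasDerivAt_rpow_const (p := β + 1) (Or.inl hz.ne')).const_mul a
  have h₂ := Real.hasDerivAt_rpow_const (p := β) (Or.inl hz.ne')
  have h₃ := (hasDerivAt_id z).const_mul (1 + a)
  rw [add_sub_cancel_right] at h₁
  rw [mul_one] at h₃
  exact ((h₁.sub h₂).add h₃).sub_const (2 * a)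

lemma deriv_P_pos {a β z : ℝ} (ha : 1 ≤ a) (hβ : 1 ≤ β) (hz : 0 < z) :
    0 < a * ((β + 1) * z ^ β) - β * z ^ (β - 1) + (1 + a) := by
  have hamgm := mul_rpow_sub_one_le hβ hz.le
  have hzβ : 0 < z ^ β := Real.rpow_pos_of_pos hz β
  have hcoeff : 0 < (a * (β + 1) - (β - 1)) * z ^ β := mul_pos (by nlinarith) hzβ
  linarith

lemma strictMonoOn_P {a β : ℝ} (ha : 1 ≤ a) (hβ : 1 ≤ β) : StrictMonoOn (P a β) (Ioi 0) := by
  refine strictMonoOn_of_deriv_pos (convex_Ioi 0)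
    (fun z hz => (hasDerivAt_P a β hz).continuousAt.continuousWithinAt) fun z hz => ?_
  rw [interior_Ioi] at hz
  rw [(hasDerivAt_P a β hz).deriv]
  exact deriv_P_pos ha hβ hz

lemma P_one (a β : ℝ) : P a β 1 = 0 := by
  simp only [P, Real.one_rpow]
  ring

theorem P_strictMono_unique_root (a β : ℝ) (ha : 1 < a) (hβ : 1 < β) :
    StrictMonoOn (P a β) (Set.Ioi 0) ∧ (∀ z : ℝ, 0 < z → (P a β z = 0 ↔ z = 1)) := by
  have hmono := strictMonoOn_P ha.le hβ.le
  refine ⟨hmono, fun z hz => ?_⟩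
  rw [← P_one a β]
  exact hmono.injOn.eq_iff hz (mem_Ioi.mpr one_pos)
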